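/- Let ι be a nonempty finite index set, F, M : ι → ℝ, and t₀ : ι → ℝ with t₀ i = (M i)·(F i) for every i. Suppose g : ℝ → ℝ is differentiable at each t₀ i with g(t₀ i) = (1 − M i)·(F i), and set c i = |g′(t₀ i) + 1|. Then for every ε > 0 there exists δ > 0 such that for every t : ι → ℝ with |t i − t₀ i| < δ for all i and D(t) = Σ_{i∈ι} |t i − t₀ i| > 0, the mask-aware ratio satisfies (min_{i∈ι} c i) − ε ≤ N(t)/D(t) ≤ (max_{i∈ι} c i) + ε, where N(t) = Σ_{i∈ι} |g(t i) + t i − F i|. (This is the rigorous multi-pixel form of Corollary 1: near the encoded signal the MA term is squeezed between the extremal derivative magnitudes |g′(t₀ i) + 1|, hence remains bounded and converges in the scalar case.) -/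
import Mathlib


/-- Multi-pixel form of Corollary 1: near the encoded signal, whenever the
denominator `D t = ∑ i, |t i - t₀ i|` is positive, the mask-aware ratio
`N t / D t` is squeezed between `(min_i c i) - ε` and `(max_i c i) + ε`,
where `c i = |g'(t₀ i) + 1|`. -/
theorem ma_ratio_squeeze {ι : Type*} [Fintype ι] [Nonempty ι]
    (F M t₀ : ι → ℝ) (ht₀ : ∀ i, t₀ i = M i * F i)
    (g : ℝ → ℝ) (hg : ∀ i, DifferentiableAt ℝ g (t₀ i))
    (hval : ∀ i, g (t₀ i) = (1 - M i) * F i)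
    (c : ι → ℝ) (hc : ∀ i, c i = |deriv g (t₀ i) + 1|) :
    ∀ ε : ℝ, 0 < ε → ∃ δ : ℝ, 0 < δ ∧ ∀ t : ι → ℝ,
      (∀ i, |t i - t₀ i| < δ) → 0 < ∑ i, |t i - t₀ i| →
      (Finset.univ.inf' Finset.univ_nonempty c) - ε ≤
          (∑ i, |g (t i) + t i - F i|) / (∑ i, |t i - t₀ i|) ∧
      (∑ i, |g (t i) + t i - F i|) / (∑ i, |t i - t₀ i|) ≤
          (Finset.univ.sup' Finset.univ_nonempty c) + ε := by
  intro ε hε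
  have key : ∀ i : ι, ∃ δ : ℝ, 0 < δ ∧ ∀ x : ℝ, |x - t₀ i| < δ →
      (c i - ε) * |x - t₀ i| ≤ |g x + x - F i| ∧
      |g x + x - F i| ≤ (c i + ε) * |x - t₀ i| := by
    intro i
    have hd : HasDerivAt (fun x => g x + x - F i) (deriv g (t₀ i) + 1) (t₀ i) :=
      (((hg i).hasDerivAt).add (hasDerivAt_id _)).sub_const (F i)
    have h0 : g (t₀ i) + t₀ i - F i = 0 := by
      rw [hval i, ht₀ i]; ring
    have hlo := (hasDerivAt_iff_isLittleO.mp hd).def hε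
    rw [Metric.eventually_nhds_iff] at hlo
    obtain ⟨δ, hδ, H⟩ := hlo
    refine ⟨δ, hδ, fun x hx => ?_⟩
    have hH := H (show dist x (t₀ i) < δ by rwa [Real.dist_eq])
    simp only [h0, sub_zero, smul_eq_mul, Real.norm_eq_abs] at hH
    set A := |g x + x - F i| with hA
    set B := |x - t₀ i| with hB
    have hprod : |(x - t₀ i) * (deriv g (t₀ i) + 1)| = c i * B := by
      rw [abs_mul, hc i, hB, mul_comm]
    have h1 : A - |(x - t₀ i) * (deriv g (t₀ i) + 1)| ≤
        |g x + x - F i - (x - t₀ i) * (deriv g (t₀ i) + 1)| :=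
      abs_sub_abs_le_abs_sub _ _
    have h2 : |(x - t₀ i) * (deriv g (t₀ i) + 1)| - A ≤
        |g x + x - F i - (x - t₀ i) * (deriv g (t₀ i) + 1)| := by
      rw [abs_sub_comm]
      exact abs_sub_abs_le_abs_sub _ _
    rw [hprod] at h1 h2
    constructor
    · nlinarith
    · nlinarith
  choose δf hδf using key
  refine ⟨Finset.univ.inf' Finset.univ_nonempty δf, ?_, ?_⟩
  · rw [Finset.lt_inf'_iff]
    exact fun i _ => (hδf i).1
  intro t ht hD
  have hbound : ∀ i : ι, (c i - ε) * |t i - t₀ i| ≤ |g (t i) + t i - F i| ∧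
      |g (t i) + t i - F i| ≤ (c i + ε) * |t i - t₀ i| := by
    intro i
    exact (hδf i).2 _ (lt_of_lt_of_le (ht i) (Finset.inf'_le _ (Finset.mem_univ i)))
  have hlow : (Finset.univ.inf' Finset.univ_nonempty c - ε) * (∑ i, |t i - t₀ i|) ≤
      ∑ i, |g (t i) + t i - F i| := by
    rw [Finset.mul_sum]
    refine Finset.sum_le_sum fun i _ => ?_
    refine le_trans ?_ (hbound i).1
    apply mul_le_mul_of_nonneg_right _ (abs_nonneg _)
    have := Finset.inf'_le c (Finset.mem_univ i)
    linarith
  have hhigh : (∑ i, |g (t i) + t i - F i|) ≤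
      (Finset.univ.sup' Finset.univ_nonempty c + ε) * (∑ i, |t i - t₀ i|) := by
    rw [Finset.mul_sum]
    refine Finset.sum_le_sum fun i _ => ?_
    refine le_trans (hbound i).2 ?_
    apply mul_le_mul_of_nonneg_right _ (abs_nonneg _)
    have := Finset.le_sup' c (Finset.mem_univ i)
    linarith
  constructor
  · rw [le_div_iff₀ hD]; exact hlow
  · rw [div_le_iff₀ hD]; exact hhigh
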